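/- arXiv:2306.00920 — 2 statements merged into one kernel-verified Lean document; each statement's English description precedes it below -/
import Mathlib

section
/- Let φ(x) = (1/√(2π))·e^{−x²/2} denote the standard Gaussian density and Φ(x) = ∫_{−∞}^x φ(u) du the standard Gaussian cumulative distribution function. Then for all σ > 0, b > 0, and β ∈ ℝ, ∫_0^∞ φ(t/σ)·Φ(βt/b) dt = (σ/(2π))·(π/2 + arctan(βσ/b)). -/
/-- The standard Gaussian density `φ(x) = (1/√(2π)) e^{-x²/2}`. -/
noncomputable def stdGaussPDF (x : ℝ) : ℝ :=
  (1 / Real.sqrt (2 * Real.pi)) * Real.exp (-x ^ 2 / 2)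

/-- The standard Gaussian cumulative distribution function `Φ(x) = ∫_{-∞}^x φ(u) du`. -/
noncomputable def stdGaussCDF (x : ℝ) : ℝ := ∫ u in Set.Iic x, stdGaussPDF u

/-!
Reading `Φ(c x)` as an integral, `∫_0^∞ φ(x) Φ(c x) dx` is the mass of the planar Gaussian
`φ(x) φ(y)` on the wedge `{x > 0, y ≤ c x}`. That density is radial, `(2π)⁻¹ e^{-r²/2}`, and the
wedge is the sector of angles `θ ∈ (-π/2, arctan c]`, so in polar coordinates its mass is
`(2π)⁻¹ (π/2 + arctan c) ∫_0^∞ r e^{-r²/2} dr = (2π)⁻¹ (π/2 + arctan c)`.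
The theorem is the case `c = βσ/b` after the substitution `t = σ x`.
-/

open MeasureTheory Real Set

lemma stdGaussPDF_eq_gaussianPDFReal : stdGaussPDF = ProbabilityTheory.gaussianPDFReal 0 1 := by
  ext x; simp [stdGaussPDF, ProbabilityTheory.gaussianPDFReal]

lemma integrable_stdGaussPDF : Integrable stdGaussPDF :=
  stdGaussPDF_eq_gaussianPDFReal ▸ ProbabilityTheory.integrable_gaussianPDFReal 0 1

lemma stdGaussPDF_mul_stdGaussPDF_polar (r θ : ℝ) :
    stdGaussPDF (r * cos θ) * stdGaussPDF (r * sin θ) = (2 * π)⁻¹ * exp (-r ^ 2 / 2) := by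
  have hexp : -(r * cos θ) ^ 2 / 2 + -(r * sin θ) ^ 2 / 2 = -r ^ 2 / 2 := by
    linear_combination (-r ^ 2 / 2) * sin_sq_add_cos_sq θ
  rw [stdGaussPDF, stdGaussPDF, mul_mul_mul_comm, ← exp_add, hexp, div_mul_div_comm,
    mul_self_sqrt (by positivity), one_mul, one_div]

lemma integral_Ioi_mul_exp_neg_sq_div_two : ∫ r in Ioi (0 : ℝ), r * exp (-r ^ 2 / 2) = 1 := by
  have h := integral_mul_cexp_neg_mul_sq (b := 1 / 2) (by norm_num)
  rw [show (2 * (1 / 2 : ℂ))⁻¹ = 1 by norm_num] at h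
  have hcast : ((∫ r in Ioi (0 : ℝ), r * exp (-r ^ 2 / 2) : ℝ) : ℂ)
      = ∫ r in Ioi (0 : ℝ), (r : ℂ) * Complex.exp (-(1 / 2) * r ^ 2) := by
    rw [← integral_complex_ofReal]
    congr 1 with r
    push_cast
    ring_nf
  exact_mod_cast hcast.trans h

lemma cos_pos_iff_of_mem_Ioo {θ : ℝ} (hθ : θ ∈ Ioo (-π) π) :
    0 < cos θ ↔ θ ∈ Ioo (-(π / 2)) (π / 2) := by
  refine ⟨fun hcos => ⟨?_, ?_⟩, cos_pos_of_mem_Ioo⟩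
  · by_contra! h
    have := cos_nonpos_of_pi_div_two_le_of_le (x := -θ) (by linarith) (by linarith [hθ.1])
    rw [cos_neg] at this
    linarith
  · by_contra! h
    linarith [cos_nonpos_of_pi_div_two_le_of_le h (by linarith [hθ.2])]

lemma sin_le_mul_cos_iff {θ : ℝ} (c : ℝ) (hθ : θ ∈ Ioo (-(π / 2)) (π / 2)) :
    sin θ ≤ c * cos θ ↔ θ ≤ arctan c := by
  rw [← div_le_iff₀ (cos_pos_of_mem_Ioo hθ), ← tan_eq_sin_div_cos, ← arctan_le_arctan_iff,
    arctan_tan hθ.1 hθ.2]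

def wedge (c : ℝ) : Set (ℝ × ℝ) := {p | 0 < p.1 ∧ p.2 ≤ c * p.1}

lemma measurableSet_wedge (c : ℝ) : MeasurableSet (wedge c) :=
  (measurableSet_lt measurable_const measurable_fst).inter
    (measurableSet_le measurable_snd (measurable_fst.const_mul c))

lemma polarCoord_symm_mem_wedge_iff {c r θ : ℝ} (hr : 0 < r) (hθ : θ ∈ Ioo (-π) π) :
    polarCoord.symm (r, θ) ∈ wedge c ↔ θ ∈ Ioc (-(π / 2)) (arctan c) := by
  change 0 < r * cos θ ∧ r * sin θ ≤ c * (r * cos θ) ↔ _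
  rw [mul_pos_iff_of_pos_left hr, cos_pos_iff_of_mem_Ioo hθ, mul_left_comm,
    mul_le_mul_iff_of_pos_left hr]
  constructor
  · rintro ⟨hθ', hle⟩
    exact ⟨hθ'.1, (sin_le_mul_cos_iff c hθ').1 hle⟩
  · rintro ⟨h1, h2⟩
    have hθ' : θ ∈ Ioo (-(π / 2)) (π / 2) := ⟨h1, h2.trans_lt (arctan_lt_pi_div_two c)⟩
    exact ⟨hθ', (sin_le_mul_cos_iff c hθ').2 h2⟩

lemma setIntegral_wedge_eq_setIntegral_polar {E : Type*} [NormedAddCommGroup E]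
    [NormedSpace ℝ E] (c : ℝ) (F : ℝ × ℝ → E) :
    ∫ p in wedge c, F p
      = ∫ p in Ioi 0 ×ˢ Ioc (-(π / 2)) (arctan c), p.1 • F (polarCoord.symm p) := by
  have hsub : Ioi 0 ×ˢ Ioc (-(π / 2)) (arctan c) ⊆ polarCoord.target := fun p hp =>
    ⟨hp.1, by linarith [hp.2.1, pi_pos], (hp.2.2.trans_lt (arctan_lt_pi_div_two c)).trans
      (by linarith [pi_pos])⟩
  rw [← integral_indicator (measurableSet_wedge c), ← integral_comp_polarCoord_symm,
    ← inter_eq_right.2 hsub, ← setIntegral_indicator (measurableSet_Ioi.prod measurableSet_Ioc)]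
  refine setIntegral_congr_fun polarCoord.open_target.measurableSet ?_
  rintro ⟨r, θ⟩ ⟨hr : 0 < r, hθ : θ ∈ Ioo (-π) π⟩
  dsimp only
  by_cases hθc : θ ∈ Ioc (-(π / 2)) (arctan c)
  · rw [indicator_of_mem ((polarCoord_symm_mem_wedge_iff hr hθ).2 hθc),
      indicator_of_mem (mk_mem_prod (mem_Ioi.2 hr) hθc)]
  · rw [indicator_of_notMem (mt (polarCoord_symm_mem_wedge_iff hr hθ).1 hθc),
      indicator_of_notMem (fun h => hθc h.2), smul_zero]

lemma setIntegral_wedge_mul (c : ℝ) {μ ν : Measure ℝ} [SFinite μ] [SFinite ν] {f g : ℝ → ℝ}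
    (hf : Integrable f μ) (hg : Integrable g ν) :
    ∫ p in wedge c, f p.1 * g p.2 ∂μ.prod ν
      = ∫ x in Ioi 0, f x * ∫ y in Iic (c * x), g y ∂ν ∂μ := by
  rw [← integral_indicator (measurableSet_wedge c),
    integral_prod _ ((hf.mul_prod hg).indicator (measurableSet_wedge c)),
    ← integral_indicator measurableSet_Ioi]
  congr 1 with x
  by_cases hx : 0 < x
  · rw [indicator_of_mem (mem_Ioi.2 hx), ← integral_const_mul,
      ← integral_indicator measurableSet_Iic]
    congr 1 with y
    simp only [indicator_apply, wedge, mem_ofPred_eq, mem_Iic, hx, true_and]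
  · simp [wedge, hx]

lemma setIntegral_wedge_stdGaussPDF_mul (c : ℝ) :
    ∫ p in wedge c, stdGaussPDF p.1 * stdGaussPDF p.2 = (2 * π)⁻¹ * (π / 2 + arctan c) := by
  rw [setIntegral_wedge_eq_setIntegral_polar]
  calc _ = ∫ p in Ioi 0 ×ˢ Ioc (-(π / 2)) (arctan c),
          (p.1 * exp (-p.1 ^ 2 / 2) * (2 * π)⁻¹) * 1 := by
        refine setIntegral_congr_fun (measurableSet_Ioi.prod measurableSet_Ioc) fun p _ => ?_
        rw [polarCoord_symm_apply, stdGaussPDF_mul_stdGaussPDF_polar, smul_eq_mul]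
        ring
    _ = (∫ r in Ioi 0, r * exp (-r ^ 2 / 2) * (2 * π)⁻¹)
          * ∫ _ in Ioc (-(π / 2)) (arctan c), 1 := by
        rw [Measure.volume_eq_prod,
          setIntegral_prod_mul (fun r => r * exp (-r ^ 2 / 2) * (2 * π)⁻¹) (fun _ => 1)]
    _ = (2 * π)⁻¹ * (π / 2 + arctan c) := by
        rw [integral_mul_const, integral_Ioi_mul_exp_neg_sq_div_two, setIntegral_const,
          volume_real_Ioc_of_le (by linarith [neg_pi_div_two_lt_arctan c])]
        simp only [smul_eq_mul, mul_one, one_mul]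
        ring

lemma integral_stdGaussPDF_mul_stdGaussCDF_mul (c : ℝ) :
    ∫ x in Ioi 0, stdGaussPDF x * stdGaussCDF (c * x) = (2 * π)⁻¹ * (π / 2 + arctan c) := by
  rw [← setIntegral_wedge_stdGaussPDF_mul, Measure.volume_eq_prod,
    setIntegral_wedge_mul c integrable_stdGaussPDF integrable_stdGaussPDF]
  rfl

theorem integral_gaussPDF_mul_gaussCDF_general (σ b β : ℝ) (hσ : 0 < σ) :
    ∫ t in Set.Ioi (0 : ℝ), stdGaussPDF (t / σ) * stdGaussCDF (β * t / b)
      = σ / (2 * Real.pi) * (Real.pi / 2 + Real.arctan (β * σ / b)) := by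
  have hscale := integral_comp_mul_left_Ioi
    (fun t => stdGaussPDF (t / σ) * stdGaussCDF (β * t / b)) 0 hσ
  have hrescale (x : ℝ) : stdGaussPDF (σ * x / σ) * stdGaussCDF (β * (σ * x) / b)
      = stdGaussPDF x * stdGaussCDF (β * σ / b * x) := by
    rw [mul_div_cancel_left₀ _ hσ.ne']
    congr 2
    ring
  simp only [hrescale, mul_zero, smul_eq_mul, integral_stdGaussPDF_mul_stdGaussCDF_mul] at hscale
  rw [eq_inv_mul_iff_mul_eq₀ hσ.ne'] at hscale
  rw [← hscale]
  ring

/-- For all `σ > 0`, `b > 0` and `β ∈ ℝ`,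
`∫_0^∞ φ(t/σ) Φ(βt/b) dt = (σ/(2π)) (π/2 + arctan(βσ/b))`. -/
theorem integral_gaussPDF_mul_gaussCDF (σ b β : ℝ) (hσ : 0 < σ) (hb : 0 < b) :
    ∫ t in Set.Ioi (0 : ℝ), stdGaussPDF (t / σ) * stdGaussCDF (β * t / b)
      = σ / (2 * Real.pi) * (Real.pi / 2 + Real.arctan (β * σ / b)) :=
  integral_gaussPDF_mul_gaussCDF_general σ b β hσ
end

section
/- Fix ε > 0, δ > 0, and an integer t ≥ 1. For a finite multiset D of points in ℝ^d, define M(D) to be the largest k ∈ {0,…,t−1} such that V_{t−k−1,D} · e^{ε(t+k+1)} ≤ δ · w_D(V_{t+k−1,D}), and M(D) = −1 if no such k exists. Then M is 1-sensitive: for every D and every D' = D ∪ {x}, |M(D) − M(D')| ≤ 1. -/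
open MeasureTheory

/-- The `i`-th canonical basis vector of `ℝ^d`. -/
def stdBasisVec (d : ℕ) (i : Fin d) : Fin d → ℝ := fun j => if j = i then 1 else 0

/-- The halfspace `h_v = {y : ⟨v, y⟩ ≥ 0}` determined by `v ∈ ℝ^d`. -/
def halfspace {d : ℕ} (v : Fin d → ℝ) : Set (Fin d → ℝ) := {y | 0 ≤ ∑ j, v j * y j}

open Classical in
/-- The approximate Tukey depth of `y` with respect to the multiset `D`: the minimum, over
the `2d` halfspaces determined by `±` canonical basis vectors that contain `y`, of the number
of points of `D` in the halfspace. -/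
noncomputable def approxTukeyDepth {d : ℕ} (D : Multiset (Fin d → ℝ)) (y : Fin d → ℝ) : ℕ :=
  sInf {m : ℕ | ∃ v : Fin d → ℝ,
    (∃ i : Fin d, v = stdBasisVec d i ∨ v = -stdBasisVec d i) ∧
    y ∈ halfspace v ∧ m = Multiset.card (D.filter (fun x => x ∈ halfspace v))}

/-- `S_{i,D}`: the set of points of approximate Tukey depth at least `i` in `D`. -/
def depthSet {d : ℕ} (D : Multiset (Fin d → ℝ)) (i : ℤ) : Set (Fin d → ℝ) :=
  {y | i ≤ (approxTukeyDepth D y : ℤ)}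

/-- `w_D(V_{i,D}) = ∫_{S_{i,D}} exp(ε T̃_D(y)) dy`: the exponential-mechanism weight of
`S_{i,D}` with score function the approximate Tukey depth. -/
noncomputable def emWeight {d : ℕ} (ε : ℝ) (D : Multiset (Fin d → ℝ)) (i : ℤ) : ENNReal :=
  ∫⁻ y in depthSet D i, ENNReal.ofReal (Real.exp (ε * approxTukeyDepth D y))

/-- The PTR check at index `k`: `V_{t-k-1,D} · e^{ε(t+k+1)} ≤ δ · w_D(V_{t+k-1,D})`. -/
def ptrCond {d : ℕ} (ε δ : ℝ) (t : ℕ) (D : Multiset (Fin d → ℝ)) (k : ℕ) : Prop :=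
  volume (depthSet D ((t : ℤ) - k - 1)) * ENNReal.ofReal (Real.exp (ε * ((t : ℝ) + k + 1)))
    ≤ ENNReal.ofReal δ * emWeight ε D ((t : ℤ) + k - 1)

open Classical in
/-- `M(D)`: the largest `k ∈ {0, …, t-1}` satisfying the PTR check, or `-1` if none exists. -/
noncomputable def ptrM {d : ℕ} (ε δ : ℝ) (t : ℕ) (D : Multiset (Fin d → ℝ)) : ℤ :=
  if ∃ k < t, ptrCond ε δ t D k then (Nat.findGreatest (ptrCond ε δ t D) (t - 1) : ℤ)
  else -1

open Classical in
lemma card_filter_cons_le {d : ℕ} (D : Multiset (Fin d → ℝ)) (x : Fin d → ℝ)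
    (p : (Fin d → ℝ) → Prop) [DecidablePred p] :
    Multiset.card (D.filter p) ≤ Multiset.card ((x ::ₘ D).filter p) ∧
      Multiset.card ((x ::ₘ D).filter p) ≤ Multiset.card (D.filter p) + 1 := by
  by_cases h : p x
  · rw [Multiset.filter_cons_of_pos _ h, Multiset.card_cons]
    omega
  · rw [Multiset.filter_cons_of_neg _ h]
    omega

open Classical in
lemma depth_mono {d : ℕ} (D : Multiset (Fin d → ℝ)) (x y : Fin d → ℝ) :
    approxTukeyDepth D y ≤ approxTukeyDepth (x ::ₘ D) y := by
  unfold approxTukeyDepth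
  set S' := {m : ℕ | ∃ v : Fin d → ℝ,
    (∃ i : Fin d, v = stdBasisVec d i ∨ v = -stdBasisVec d i) ∧
    y ∈ halfspace v ∧ m = Multiset.card ((x ::ₘ D).filter (fun z => z ∈ halfspace v))} with hS'
  by_cases h : S'.Nonempty
  · obtain ⟨v, hv, hy, hm⟩ := Nat.sInf_mem h
    calc sInf _ ≤ Multiset.card (D.filter (fun z => z ∈ halfspace v)) := by
          apply Nat.sInf_le; exact ⟨v, hv, hy, rfl⟩
      _ ≤ sInf S' := by
          rw [hm]; exact (card_filter_cons_le D x _).1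
  · rw [Set.not_nonempty_iff_eq_empty] at h
    have h2 : {m : ℕ | ∃ v : Fin d → ℝ,
        (∃ i : Fin d, v = stdBasisVec d i ∨ v = -stdBasisVec d i) ∧
        y ∈ halfspace v ∧ m = Multiset.card (D.filter (fun z => z ∈ halfspace v))} = ∅ := by
      rw [Set.eq_empty_iff_forall_notMem]
      rintro m ⟨v, hv, hy, hm⟩
      have : Multiset.card ((x ::ₘ D).filter (fun z => z ∈ halfspace v)) ∈ S' :=
        ⟨v, hv, hy, rfl⟩
      simp [h] at this
    rw [h2, h, Nat.sInf_empty]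

open Classical in
lemma depth_le_succ {d : ℕ} (D : Multiset (Fin d → ℝ)) (x y : Fin d → ℝ) :
    approxTukeyDepth (x ::ₘ D) y ≤ approxTukeyDepth D y + 1 := by
  unfold approxTukeyDepth
  set S := {m : ℕ | ∃ v : Fin d → ℝ,
    (∃ i : Fin d, v = stdBasisVec d i ∨ v = -stdBasisVec d i) ∧
    y ∈ halfspace v ∧ m = Multiset.card (D.filter (fun z => z ∈ halfspace v))} with hS
  by_cases h : S.Nonempty
  · obtain ⟨v, hv, hy, hm⟩ := Nat.sInf_mem h
    calc sInf _ ≤ Multiset.card ((x ::ₘ D).filter (fun z => z ∈ halfspace v)) := by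
          apply Nat.sInf_le; exact ⟨v, hv, hy, rfl⟩
      _ ≤ sInf S + 1 := by
          rw [hm]; exact (card_filter_cons_le D x _).2
  · rw [Set.not_nonempty_iff_eq_empty] at h
    have h2 : {m : ℕ | ∃ v : Fin d → ℝ,
        (∃ i : Fin d, v = stdBasisVec d i ∨ v = -stdBasisVec d i) ∧
        y ∈ halfspace v ∧ m = Multiset.card ((x ::ₘ D).filter (fun z => z ∈ halfspace v))} = ∅ := by
      rw [Set.eq_empty_iff_forall_notMem]
      rintro m ⟨v, hv, hy, hm⟩
      have : Multiset.card (D.filter (fun z => z ∈ halfspace v)) ∈ S :=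
        ⟨v, hv, hy, rfl⟩
      simp [h] at this
    rw [h2, h, Nat.sInf_empty]
    omega

lemma depthSet_anti {d : ℕ} (D : Multiset (Fin d → ℝ)) {i j : ℤ} (h : i ≤ j) :
    depthSet D j ⊆ depthSet D i := fun y hy => le_trans h hy

lemma depthSet_subset_cons {d : ℕ} (D : Multiset (Fin d → ℝ)) (x : Fin d → ℝ) (i : ℤ) :
    depthSet D i ⊆ depthSet (x ::ₘ D) i := by
  intro y hy
  have := depth_mono D x y
  simp only [depthSet, Set.mem_setOf_eq] at *
  omega

lemma depthSet_cons_subset {d : ℕ} (D : Multiset (Fin d → ℝ)) (x : Fin d → ℝ) (i : ℤ) :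
    depthSet (x ::ₘ D) i ⊆ depthSet D (i - 1) := by
  intro y hy
  have := depth_le_succ D x y
  simp only [depthSet, Set.mem_setOf_eq] at *
  omega

lemma weight_le_cons {d : ℕ} {ε : ℝ} (hε : 0 ≤ ε) (D : Multiset (Fin d → ℝ))
    (x : Fin d → ℝ) (i : ℤ) :
    emWeight ε D i ≤ emWeight ε (x ::ₘ D) (i - 1) := by
  unfold emWeight
  calc ∫⁻ y in depthSet D i, ENNReal.ofReal (Real.exp (ε * approxTukeyDepth D y))
      ≤ ∫⁻ y in depthSet D i,
          ENNReal.ofReal (Real.exp (ε * approxTukeyDepth (x ::ₘ D) y)) := by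
        apply lintegral_mono
        intro y
        exact ENNReal.ofReal_le_ofReal (Real.exp_le_exp.2
          (mul_le_mul_of_nonneg_left (Nat.cast_le.2 (depth_mono D x y)) hε))
    _ ≤ ∫⁻ y in depthSet (x ::ₘ D) (i - 1),
          ENNReal.ofReal (Real.exp (ε * approxTukeyDepth (x ::ₘ D) y)) := by
        apply lintegral_mono_set
        exact (depthSet_subset_cons D x i).trans
          (depthSet_anti (x ::ₘ D) (by omega))

lemma weight_cons_le {d : ℕ} {ε : ℝ} (hε : 0 ≤ ε) (D : Multiset (Fin d → ℝ))
    (x : Fin d → ℝ) (i : ℤ) :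
    emWeight ε (x ::ₘ D) i ≤ ENNReal.ofReal (Real.exp ε) * emWeight ε D (i - 1) := by
  unfold emWeight
  calc ∫⁻ y in depthSet (x ::ₘ D) i,
        ENNReal.ofReal (Real.exp (ε * approxTukeyDepth (x ::ₘ D) y))
      ≤ ∫⁻ y in depthSet (x ::ₘ D) i,
          ENNReal.ofReal (Real.exp ε) * ENNReal.ofReal (Real.exp (ε * approxTukeyDepth D y)) := by
        apply lintegral_mono
        intro y
        simp only []
        rw [← ENNReal.ofReal_mul (Real.exp_nonneg ε), ← Real.exp_add]
        apply ENNReal.ofReal_le_ofReal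
        apply Real.exp_le_exp.2
        have h1 : (approxTukeyDepth (x ::ₘ D) y : ℝ) ≤ (approxTukeyDepth D y : ℝ) + 1 := by
          have := depth_le_succ D x y
          push_cast
          exact_mod_cast Nat.cast_le.2 this
        nlinarith [mul_le_mul_of_nonneg_left h1 hε]
    _ ≤ ∫⁻ y in depthSet D (i - 1),
          ENNReal.ofReal (Real.exp ε) * ENNReal.ofReal (Real.exp (ε * approxTukeyDepth D y)) := by
        apply lintegral_mono_set
        exact depthSet_cons_subset D x i
    _ = ENNReal.ofReal (Real.exp ε) * ∫⁻ y in depthSet D (i - 1),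
          ENNReal.ofReal (Real.exp (ε * approxTukeyDepth D y)) := by
        rw [lintegral_const_mul' _ _ ENNReal.ofReal_ne_top]

lemma ptrCond_cons_of {d : ℕ} {ε δ : ℝ} (hε : 0 ≤ ε) (t m : ℕ)
    (D : Multiset (Fin d → ℝ)) (x : Fin d → ℝ) (h : ptrCond ε δ t D (m + 1)) :
    ptrCond ε δ t (x ::ₘ D) m := by
  unfold ptrCond at h ⊢
  push_cast at h ⊢
  calc volume (depthSet (x ::ₘ D) ((t : ℤ) - m - 1))
        * ENNReal.ofReal (Real.exp (ε * ((t : ℝ) + m + 1)))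
      ≤ volume (depthSet D ((t : ℤ) - (m + 1) - 1))
        * ENNReal.ofReal (Real.exp (ε * ((t : ℝ) + (m + 1) + 1))) := by
        apply mul_le_mul'
        · apply measure_mono
          refine (depthSet_cons_subset D x ((t : ℤ) - m - 1)).trans ?_
          apply depthSet_anti
          omega
        · apply ENNReal.ofReal_le_ofReal
          apply Real.exp_le_exp.2
          apply mul_le_mul_of_nonneg_left (by linarith) hε
    _ ≤ ENNReal.ofReal δ * emWeight ε D ((t : ℤ) + (m + 1) - 1) := h
    _ ≤ ENNReal.ofReal δ * emWeight ε (x ::ₘ D) ((t : ℤ) + m - 1) := by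
        apply mul_le_mul_right
        have := weight_le_cons hε D x ((t : ℤ) + m)
        have e1 : (t : ℤ) + (m + 1) - 1 = (t : ℤ) + m := by ring
        have e2 : (t : ℤ) + m - 1 = ((t : ℤ) + m) - 1 := by ring
        rw [e1, e2]
        exact this

lemma ptrCond_of_cons {d : ℕ} {ε δ : ℝ} (hε : 0 ≤ ε) (t m : ℕ)
    (D : Multiset (Fin d → ℝ)) (x : Fin d → ℝ) (h : ptrCond ε δ t (x ::ₘ D) (m + 1)) :
    ptrCond ε δ t D m := by
  unfold ptrCond at h ⊢
  push_cast at h ⊢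
  set Eε := ENNReal.ofReal (Real.exp ε) with hEε
  have hEε0 : Eε ≠ 0 := by
    rw [hEε]
    simp [ENNReal.ofReal_eq_zero, Real.exp_pos ε, not_le, (Real.exp_pos ε)]
  have hEεtop : Eε ≠ ⊤ := ENNReal.ofReal_ne_top
  rw [← ENNReal.mul_le_mul_iff_left hEε0 hEεtop]
  calc volume (depthSet D ((t : ℤ) - m - 1))
        * ENNReal.ofReal (Real.exp (ε * ((t : ℝ) + m + 1))) * Eε
      = volume (depthSet D ((t : ℤ) - m - 1))
        * ENNReal.ofReal (Real.exp (ε * ((t : ℝ) + (m + 1) + 1))) := by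
        rw [mul_assoc, hEε, ← ENNReal.ofReal_mul (Real.exp_nonneg _), ← Real.exp_add]
        ring_nf
    _ ≤ volume (depthSet (x ::ₘ D) ((t : ℤ) - (m + 1) - 1))
        * ENNReal.ofReal (Real.exp (ε * ((t : ℝ) + (m + 1) + 1))) := by
        apply mul_le_mul'
        · apply measure_mono
          refine (depthSet_subset_cons D x ((t : ℤ) - m - 1)).trans ?_
          apply depthSet_anti
          omega
        · exact le_refl _
    _ ≤ ENNReal.ofReal δ * emWeight ε (x ::ₘ D) ((t : ℤ) + (m + 1) - 1) := h
    _ ≤ ENNReal.ofReal δ * (Eε * emWeight ε D ((t : ℤ) + m - 1)) := by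
        apply mul_le_mul_right
        have := weight_cons_le hε D x ((t : ℤ) + m + 1 - 1)
        have e1 : (t : ℤ) + (m + 1) - 1 = (t : ℤ) + m + 1 - 1 := by ring
        have e2 : (t : ℤ) + m + 1 - 1 - 1 = (t : ℤ) + m - 1 := by ring
        rw [e1]
        rw [e2] at this
        exact this
    _ = ENNReal.ofReal δ * emWeight ε D ((t : ℤ) + m - 1) * Eε := by ring

lemma findGreatest_abs_le {P Q : ℕ → Prop} [DecidablePred P] [DecidablePred Q]
    (t : ℕ) (ht : 1 ≤ t)
    (hPQ : ∀ m, P (m + 1) → Q m) (hQP : ∀ m, Q (m + 1) → P m) :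
    |(if ∃ k < t, P k then (Nat.findGreatest P (t - 1) : ℤ) else -1)
      - (if ∃ k < t, Q k then (Nat.findGreatest Q (t - 1) : ℤ) else -1)| ≤ 1 := by
  by_cases hA : ∃ k < t, P k <;> by_cases hB : ∃ k < t, Q k
  · rw [if_pos hA, if_pos hB]
    obtain ⟨k, hk, hPk⟩ := hA
    obtain ⟨k', hk', hQk'⟩ := hB
    have hPN : P (Nat.findGreatest P (t - 1)) :=
      Nat.findGreatest_spec (by omega : k ≤ t - 1) hPk
    have hQN : Q (Nat.findGreatest Q (t - 1)) :=
      Nat.findGreatest_spec (by omega : k' ≤ t - 1) hQk'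
    have hNle : Nat.findGreatest P (t - 1) ≤ t - 1 := Nat.findGreatest_le _
    have hN'le : Nat.findGreatest Q (t - 1) ≤ t - 1 := Nat.findGreatest_le _
    have c1 : Nat.findGreatest P (t - 1) ≤ Nat.findGreatest Q (t - 1) + 1 := by
      rcases Nat.eq_zero_or_pos (Nat.findGreatest P (t - 1)) with h0 | h1
      · omega
      · obtain ⟨m, hm⟩ : ∃ m, Nat.findGreatest P (t - 1) = m + 1 :=
          ⟨Nat.findGreatest P (t - 1) - 1, by omega⟩
        rw [hm] at hPN
        have := Nat.le_findGreatest (by omega : m ≤ t - 1) (hPQ m hPN)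
        omega
    have c2 : Nat.findGreatest Q (t - 1) ≤ Nat.findGreatest P (t - 1) + 1 := by
      rcases Nat.eq_zero_or_pos (Nat.findGreatest Q (t - 1)) with h0 | h1
      · omega
      · obtain ⟨m, hm⟩ : ∃ m, Nat.findGreatest Q (t - 1) = m + 1 :=
          ⟨Nat.findGreatest Q (t - 1) - 1, by omega⟩
        rw [hm] at hQN
        have := Nat.le_findGreatest (by omega : m ≤ t - 1) (hQP m hQN)
        omega
    rw [abs_le]
    omega
  · rw [if_pos hA, if_neg hB]
    obtain ⟨k, hk, hPk⟩ := hA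
    have hPN : P (Nat.findGreatest P (t - 1)) :=
      Nat.findGreatest_spec (by omega : k ≤ t - 1) hPk
    have hNle : Nat.findGreatest P (t - 1) ≤ t - 1 := Nat.findGreatest_le _
    have hN0 : Nat.findGreatest P (t - 1) = 0 := by
      rcases Nat.eq_zero_or_pos (Nat.findGreatest P (t - 1)) with h0 | h1
      · exact h0
      · exfalso
        obtain ⟨m, hm⟩ : ∃ m, Nat.findGreatest P (t - 1) = m + 1 :=
          ⟨Nat.findGreatest P (t - 1) - 1, by omega⟩
        rw [hm] at hPN
        exact hB ⟨m, by omega, hPQ m hPN⟩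
    rw [hN0]
    norm_num
  · rw [if_neg hA, if_pos hB]
    obtain ⟨k, hk, hQk⟩ := hB
    have hQN : Q (Nat.findGreatest Q (t - 1)) :=
      Nat.findGreatest_spec (by omega : k ≤ t - 1) hQk
    have hNle : Nat.findGreatest Q (t - 1) ≤ t - 1 := Nat.findGreatest_le _
    have hN0 : Nat.findGreatest Q (t - 1) = 0 := by
      rcases Nat.eq_zero_or_pos (Nat.findGreatest Q (t - 1)) with h0 | h1
      · exact h0
      · exfalso
        obtain ⟨m, hm⟩ : ∃ m, Nat.findGreatest Q (t - 1) = m + 1 :=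
          ⟨Nat.findGreatest Q (t - 1) - 1, by omega⟩
        rw [hm] at hQN
        exact hA ⟨m, by omega, hQP m hQN⟩
    rw [hN0]
    norm_num
  · rw [if_neg hA, if_neg hB]
    norm_num

/-- The mechanism `M` is 1-sensitive: adding a single point to `D` changes `M(D)` by at
most `1`. -/
theorem ptrM_one_sensitive {d : ℕ} (ε δ : ℝ) (hε : 0 < ε) (hδ : 0 < δ) (t : ℕ) (ht : 1 ≤ t)
    (D : Multiset (Fin d → ℝ)) (x : Fin d → ℝ) :
    |ptrM ε δ t D - ptrM ε δ t (x ::ₘ D)| ≤ 1 := by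
  classical
  unfold ptrM
  exact findGreatest_abs_le t ht
    (fun m hm => ptrCond_cons_of hε.le t m D x hm)
    (fun m hm => ptrCond_of_cons hε.le t m D x hm)
end
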